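/- Let r ≥ 1 be an integer and τ = a + b·i ∈ ℂ with b > 0. Then ∫₀¹ ∫₀¹ |g₀(p + τq)|² · exp(−2·(2r+1)·π·b·q²) · 4π dp dq = (8π²/((2r+1)·b))^{1/2}. (This computes the squared L²-norm ‖g₀·t^{r+1/2}‖² = (8π²/((2r+1)b))^{1/2} of the section g₀·t^{r+1/2} over the fundamental domain, with respect to the standard hermitian structure and the symplectic volume ω = 4π dp∧dq; here |t^{r+1/2}(p,q)|² = exp(−2(2r+1)πbq²).) -/

import Mathlib

/-!
Writing `N = 2r + 1` and `T = Nτ`, the function `p ↦ g₀(p + τq)` is the Fourier series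
`∑ₙ θₙ(Tq, T) e^{2πi N n p}` whose coefficients are the terms of Jacobi's `θ₂`, so by Parseval the
inner integral is `∑ₙ |θₙ(Tq, T)|²`. Against the weight `e^{-2π (Im T) q²}` this becomes
`∑ₙ e^{-2π (Im T)(q + n)²}`, and integrating the periodisation of a Gaussian over `[0, 1]` gives its
integral over `ℝ`, namely `(2 Im T)^{-1/2}`.
-/

/-- The theta function
`g₀(z) = Σ_{m∈ℤ} exp(m·π·i·((4r+2)·z + (2r+1)·m·τ))`. -/
noncomputable def gZero (r : ℕ) (τ : ℂ) (z : ℂ) : ℂ :=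
  ∑' m : ℤ, Complex.exp ((m : ℂ) * Real.pi * Complex.I *
      ((4 * (r : ℂ) + 2) * z + (2 * (r : ℂ) + 1) * (m : ℂ) * τ))

open MeasureTheory Complex
open scoped Real Interval ComplexConjugate

namespace intervalIntegral

variable {E : Type*} [NormedAddCommGroup E] [NormedSpace ℝ E]

theorem integral_tsum_of_norm_le [CompleteSpace E] {ι : Type*} [Countable ι] {F : ι → ℝ → E}
    {a b : ℝ} (hF : ∀ i, AEStronglyMeasurable (F i) (volume.restrict (Ι a b))) {C : ι → ℝ}
    (hC : Summable C) (hle : ∀ i t, ‖F i t‖ ≤ C i) :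
    ∫ t in a..b, ∑' i, F i t = ∑' i, ∫ t in a..b, F i t :=
  (hasSum_integral_of_dominated_convergence (fun i _ ↦ C i) hF
    (fun i ↦ .of_forall fun t _ ↦ hle i t) (.of_forall fun _ _ ↦ hC) intervalIntegrable_const
    (.of_forall fun t _ ↦ (hC.of_norm_bounded (hle · t)).hasSum)).tsum_eq.symm

theorem integral_tsum_comp_add_intCast {f : ℝ → E} (hf : Integrable f) :
    ∫ x in (0 : ℝ)..1, ∑' n : ℤ, f (x + n) = ∫ x, f x := by
  have hsum := hf.norm.hasSum_intervalIntegral_comp_add_int.summable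
  simp only [integral_of_le zero_le_one] at hsum ⊢
  rw [← integral_tsum_of_summable_integral_norm
    (fun n : ℤ ↦ (hf.comp_add_right (n : ℝ)).integrableOn) hsum,
    hf.hasSum_intervalIntegral_comp_add_int.tsum_eq.symm]
  simp only [integral_of_le zero_le_one]

end intervalIntegral

theorem integral_exp_two_pi_I_intCast_mul (n : ℤ) :
    ∫ p in (0 : ℝ)..1, cexp (2 * π * I * n * p) = if n = 0 then 1 else 0 := by
  split_ifs with hn
  · simp [hn]
  · have hc : 2 * π * I * n ≠ 0 := by simp [Real.pi_ne_zero, hn]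
    rw [integral_exp_mul_complex hc]
    simp [exp_int_mul_two_pi_mul_I, mul_comm _ (n : ℂ)]

theorem norm_exp_two_pi_I_intCast_mul (n : ℤ) (p : ℝ) : ‖cexp (2 * π * I * n * p)‖ = 1 := by
  simpa [mul_comm, mul_left_comm, mul_assoc] using norm_exp_ofReal_mul_I (2 * π * n * p)

section FourierSeries

variable {ι : Type*} [Countable ι] {c : ι → ℂ} {k : ι → ℤ}

theorem integral_tsum_mul_exp_mul_exp_neg (hc : Summable (‖c ·‖)) (hk : Function.Injective k)
    (j : ι) :
    ∫ p in (0 : ℝ)..1, (∑' i, c i * cexp (2 * π * I * k i * p)) * cexp (-(2 * π * I * k j * p))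
      = c j := by
  have hterm (i : ι) (p : ℝ) : c i * cexp (2 * π * I * k i * p) * cexp (-(2 * π * I * k j * p))
      = c i * cexp (2 * π * I * (k i - k j : ℤ) * p) := by
    rw [mul_assoc, ← Complex.exp_add]
    push_cast
    ring_nf
  simp_rw [← tsum_mul_right, hterm]
  rw [intervalIntegral.integral_tsum_of_norm_le
    (fun i ↦ (by fun_prop : Continuous _).aestronglyMeasurable) hc
    (fun i p ↦ by rw [norm_mul, norm_exp_two_pi_I_intCast_mul, mul_one])]
  simp only [intervalIntegral.integral_const_mul, integral_exp_two_pi_I_intCast_mul, mul_ite,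
    mul_one, mul_zero]
  rw [tsum_eq_single j fun i hi ↦ if_neg (sub_ne_zero.2 (hk.ne hi)), if_pos (sub_self _)]

theorem integral_norm_sq_tsum_mul_exp (hc : Summable (‖c ·‖)) (hk : Function.Injective k) :
    ∫ p in (0 : ℝ)..1, ‖∑' i, c i * cexp (2 * π * I * k i * p)‖ ^ 2 = ∑' i, ‖c i‖ ^ 2 := by
  set F : ℝ → ℂ := fun p ↦ ∑' i, c i * cexp (2 * π * I * k i * p)
  have hbound (i : ι) (p : ℝ) : ‖c i * cexp (2 * π * I * k i * p)‖ ≤ ‖c i‖ := by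
    rw [norm_mul, norm_exp_two_pi_I_intCast_mul, mul_one]
  have hF : Continuous F := continuous_tsum (fun i ↦ by fun_prop) hc hbound
  have hFle (p : ℝ) : ‖F p‖ ≤ ∑' i, ‖c i‖ := by
    have hs := hc.of_nonneg_of_le (fun _ ↦ norm_nonneg _) (hbound · p)
    exact (norm_tsum_le_tsum_norm hs).trans (hs.tsum_le_tsum (hbound · p) hc)
  have hconj (p : ℝ) : conj (F p) = ∑' j, conj (c j) * cexp (-(2 * π * I * k j * p)) := by
    rw [conj_tsum]
    refine tsum_congr fun j ↦ ?_
    rw [map_mul, ← exp_conj]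
    simp [map_ofNat]
  have hswap : ∫ p in (0 : ℝ)..1, ∑' j, conj (c j) * (F p * cexp (-(2 * π * I * k j * p)))
      = ∑' j, ∫ p in (0 : ℝ)..1, conj (c j) * (F p * cexp (-(2 * π * I * k j * p))) := by
    refine intervalIntegral.integral_tsum_of_norm_le
      (fun j ↦ (by fun_prop : Continuous _).aestronglyMeasurable)
      (hc.mul_right (∑' i, ‖c i‖)) fun j p ↦ ?_
    rw [show -(2 * π * I * k j * p) = 2 * π * I * (-k j : ℤ) * p by push_cast; ring, norm_mul,
      norm_mul, norm_exp_two_pi_I_intCast_mul, mul_one, Complex.norm_conj]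
    exact mul_le_mul_of_nonneg_left (hFle p) (norm_nonneg _)
  apply ofReal_injective
  calc ((∫ p in (0 : ℝ)..1, ‖F p‖ ^ 2 : ℝ) : ℂ)
      = ∫ p in (0 : ℝ)..1, ∑' j, conj (c j) * (F p * cexp (-(2 * π * I * k j * p))) := by
        rw [← intervalIntegral.integral_ofReal]
        refine intervalIntegral.integral_congr fun p _ ↦ ?_
        rw [ofReal_pow, ← mul_conj', hconj, ← tsum_mul_left]
        simp only [mul_left_comm (F p)]
    _ = ∑' j, conj (c j) * c j := by
        rw [hswap]
        refine tsum_congr fun j ↦ ?_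
        rw [intervalIntegral.integral_const_mul]
        exact congrArg _ (integral_tsum_mul_exp_mul_exp_neg hc hk j)
    _ = ((∑' i, ‖c i‖ ^ 2 : ℝ) : ℂ) := by
        rw [ofReal_tsum]
        refine tsum_congr fun i ↦ ?_
        rw [mul_comm, mul_conj', ofReal_pow]

end FourierSeries

theorem gZero_ofReal_add_mul_ofReal (r : ℕ) (τ : ℂ) (p q : ℝ) :
    gZero r τ (p + τ * q) = ∑' n : ℤ, jacobiTheta₂_term n ((2 * r + 1) * τ * q) ((2 * r + 1) * τ)
      * cexp (2 * π * I * ((2 * r + 1) * n : ℤ) * p) := by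
  refine tsum_congr fun n ↦ ?_
  rw [jacobiTheta₂_term, ← Complex.exp_add]
  push_cast
  ring_nf

theorem norm_jacobiTheta₂_term_mul_ofReal_sq_mul_exp (n : ℤ) (T : ℂ) (q : ℝ) :
    ‖jacobiTheta₂_term n (T * q) T‖ ^ 2 * rexp (-(2 * π * T.im * q ^ 2))
      = rexp (-(2 * π * T.im) * (q + n) ^ 2) := by
  rw [norm_jacobiTheta₂_term, ← Real.exp_nat_mul, ← Real.exp_add]
  simp only [mul_im, ofReal_re, ofReal_im, mul_zero]
  ring_nf

theorem statement13_general (r : ℕ) (a b : ℝ) (hb : 0 < b) :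
    (∫ q in (0:ℝ)..1, ∫ p in (0:ℝ)..1,
        ‖gZero r ((a : ℂ) + (b : ℂ) * Complex.I)
            ((p : ℂ) + ((a : ℂ) + (b : ℂ) * Complex.I) * (q : ℂ))‖ ^ 2
          * Real.exp (-(2 * (2 * (r : ℝ) + 1) * Real.pi * b * q ^ 2)) * (4 * Real.pi))
      = Real.sqrt (8 * Real.pi ^ 2 / ((2 * (r : ℝ) + 1) * b)) := by
  set τ : ℂ := a + b * I
  set T : ℂ := (2 * r + 1) * τ
  have hT : T.im = (2 * r + 1) * b := by simp [T, τ]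
  have hTpos : 0 < T.im := by rw [hT]; positivity
  have hK : 0 < 2 * π * T.im := by positivity
  have hk : Function.Injective fun n : ℤ ↦ (2 * r + 1) * n := mul_right_injective₀ (by omega)
  have hinner (q : ℝ) : ∫ p in (0:ℝ)..1, ‖gZero r τ (p + τ * q)‖ ^ 2
      * rexp (-(2 * (2 * r + 1) * π * b * q ^ 2)) * (4 * π)
        = (∑' n : ℤ, rexp (-(2 * π * T.im) * (q + n) ^ 2)) * (4 * π) := by
    have hc : Summable fun n : ℤ ↦ ‖jacobiTheta₂_term n (T * q) T‖ :=
      ((summable_jacobiTheta₂_term_iff _ _).2 hTpos).norm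
    simp_rw [gZero_ofReal_add_mul_ofReal, intervalIntegral.integral_mul_const]
    rw [integral_norm_sq_tsum_mul_exp hc hk, ← tsum_mul_right]
    congr 1
    refine tsum_congr fun n ↦ ?_
    rw [← norm_jacobiTheta₂_term_mul_ofReal_sq_mul_exp, hT]
    ring_nf
  rw [intervalIntegral.integral_congr fun q _ ↦ hinner q, intervalIntegral.integral_mul_const,
    intervalIntegral.integral_tsum_comp_add_intCast (integrable_exp_neg_mul_sq hK),
    integral_gaussian, hT,
    show 8 * π ^ 2 / ((2 * r + 1) * b) = (4 * π) ^ 2 * (π / (2 * π * ((2 * r + 1) * b))) by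
      field_simp; ring,
    Real.sqrt_mul (sq_nonneg _), Real.sqrt_sq (by positivity), mul_comm]

/-- the squared `L²`-norm of the section `g₀·t^{r+1/2}` over the
fundamental domain (with `|t^{r+1/2}(p,q)|² = exp(−2(2r+1)πbq²)` and symplectic
volume `4π dp∧dq`) equals `(8π²/((2r+1)b))^{1/2}`. -/
theorem statement13 (r : ℕ) (hr : 1 ≤ r) (a b : ℝ) (hb : 0 < b) :
    (∫ q in (0:ℝ)..1, ∫ p in (0:ℝ)..1,
        ‖gZero r ((a : ℂ) + (b : ℂ) * Complex.I)
            ((p : ℂ) + ((a : ℂ) + (b : ℂ) * Complex.I) * (q : ℂ))‖ ^ 2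
          * Real.exp (-(2 * (2 * (r : ℝ) + 1) * Real.pi * b * q ^ 2)) * (4 * Real.pi))
      = Real.sqrt (8 * Real.pi ^ 2 / ((2 * (r : ℝ) + 1) * b)) :=
  statement13_general r a b hb
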